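/- Let G and H be finite connected graphs and let S = {(u_i,v_i) : i ∈ [r]} be a monophonic position set of the Cartesian product G □ H with r ≥ 2. Then at least one of the following holds: (a) all first coordinates u_i are equal, or all second coordinates v_i are equal (S lies in a single H-layer or a single G-layer); (b) u_1,…,u_r are pairwise distinct vertices of G and v_1,…,v_r are pairwise distinct vertices of H, and neither π_G(S) nor π_H(S) induces a clique; (c) π_G(S) induces a clique of G of order at least 2 and v_1,…,v_r are pairwise distinct, or π_H(S) induces a clique of H of order at least 2 and u_1,…,u_r are pairwise distinct. -/

import Mathlib

open SimpleGraph

/-- A walk is *monophonic* if it is an induced path: it is a path and the only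
edges of the graph between vertices of the walk are the edges of the walk. -/
def SimpleGraph.Walk.IsMonophonic {V : Type*} {G : SimpleGraph V} {u v : V}
    (p : G.Walk u v) : Prop :=
  p.IsPath ∧ ∀ a b : V, a ∈ p.support → b ∈ p.support → G.Adj a b → p.toSubgraph.Adj a b

/-- A set `S` is a *monophonic position set* if no monophonic path contains
more than two vertices of `S`. -/
def SimpleGraph.IsMPSet {V : Type*} (G : SimpleGraph V) (S : Set V) : Prop :=
  ∀ ⦃u v : V⦄ (p : G.Walk u v), p.IsMonophonic → ({x ∈ S | x ∈ p.support}).ncard ≤ 2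

/-- The *monophonic position number*: the largest cardinality of a monophonic
position set. -/
noncomputable def SimpleGraph.mpNum {V : Type*} (G : SimpleGraph V) : ℕ :=
  sSup {n | ∃ S : Set V, G.IsMPSet S ∧ S.ncard = n}

/-!
Every case is ruled out by exhibiting three points of `S` on one induced path of `G □ H`. The
paths used are staircases: an induced path in an `H`-layer, then one in a `G`-layer, then one in a
second `H`-layer. Such a staircase is induced as soon as its two `H`-layers are non-adjacent, or its
two vertical pieces meet only at the height of the horizontal one. If two points of `S` share a
first coordinate `g`, staircases show in turn that every other first coordinate is adjacent to `g`,
that the first coordinates form a clique, and that the second coordinates are distinct. Swapping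
the factors handles a repeated second coordinate; if neither coordinate repeats, the trichotomy is
a case split.
-/

namespace SimpleGraph

section

variable {V V' : Type*} {G : SimpleGraph V} {G' : SimpleGraph V'}

namespace Walk

variable {u v w : V}

lemma isMonophonic_iff (p : G.Walk u v) : p.IsMonophonic ↔
    p.IsPath ∧ ∀ a b : V, a ∈ p.support → b ∈ p.support → G.Adj a b → s(a, b) ∈ p.edges := by
  simp only [IsMonophonic, ← Subgraph.mem_edgeSet, mem_edges_toSubgraph]

lemma isMonophonic_nil : (nil : G.Walk u u).IsMonophonic :=
  (isMonophonic_iff _).2 ⟨.nil, by simp⟩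

lemma isMonophonic_toWalk (h : G.Adj u v) : h.toWalk.IsMonophonic :=
  (isMonophonic_iff _).2 ⟨by simp [isPath_def, h.ne], by
    simp only [Adj.toWalk, support_cons, support_nil, List.mem_cons, List.not_mem_nil, or_false,
      edges_cons, edges_nil]
    rintro a b (rfl | rfl) (rfl | rfl) hab <;> simp_all [Sym2.eq_swap]⟩

lemma exists_isSubwalk_of_mem_support {p : G.Walk u v} {a b : V}
    (ha : a ∈ p.support) (hb : b ∈ p.support) :
    (∃ q : G.Walk a b, q.IsSubwalk p) ∨ ∃ q : G.Walk b a, q.IsSubwalk p := by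
  classical
  rw [← p.take_spec ha, mem_support_append_iff] at hb
  rcases hb with hb | hb
  · exact .inr ⟨_, (isSubwalk_dropUntil _ hb).trans (isSubwalk_takeUntil _ ha)⟩
  · exact .inl ⟨_, (isSubwalk_takeUntil _ hb).trans (isSubwalk_dropUntil _ ha)⟩

lemma isMonophonic_of_length_eq_dist (p : G.Walk u v) (hp : p.length = G.dist u v) :
    p.IsMonophonic := by
  refine (isMonophonic_iff p).2 ⟨p.isPath_of_length_eq_dist hp, fun a b ha hb hab => ?_⟩
  -- a geodesic subwalk between adjacent vertices is the edge joining them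
  have edge_mem {x y : V} (q : G.Walk x y) (hq : q.IsSubwalk p) (hxy : G.Adj x y) :
      s(x, y) ∈ p.edges := by
    have hlen : q.length = 1 := (length_eq_dist_of_subwalk hp hq).trans (dist_eq_one_iff_adj.2 hxy)
    refine hq.edges_subset ?_
    cases q with
    | nil => simp at hlen
    | cons h q' => cases q' with
      | nil => simp
      | cons => simp at hlen
  rcases exists_isSubwalk_of_mem_support ha hb with ⟨q, hq⟩ | ⟨q, hq⟩
  · exact edge_mem q hq hab
  · exact Sym2.eq_swap ▸ edge_mem q hq hab.symm

lemma IsMonophonic.map {p : G.Walk u v} (hp : p.IsMonophonic) (f : G ↪g G') :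
    (p.map f.toHom).IsMonophonic := by
  rw [isMonophonic_iff] at hp ⊢
  refine ⟨hp.1.map f.injective, fun a b ha hb hab => ?_⟩
  rw [support_map, List.mem_map] at ha hb
  obtain ⟨a, ha, rfl⟩ := ha
  obtain ⟨b, hb, rfl⟩ := hb
  rw [edges_map]
  exact List.mem_map_of_mem (hp.2 a b ha hb (f.map_adj_iff.1 hab))

lemma IsMonophonic.append {p : G.Walk u v} {q : G.Walk v w} (hp : p.IsMonophonic)
    (hq : q.IsMonophonic)
    (h : ∀ a ∈ p.support, ∀ b ∈ q.support, (a = b ∨ G.Adj a b) → a = v ∨ b = v) :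
    (p.append q).IsMonophonic := by
  rw [isMonophonic_iff] at hp hq ⊢
  refine ⟨?_, fun a b ha hb hab => ?_⟩
  · rw [isPath_def, support_append, List.nodup_append]
    refine ⟨hp.1.support_nodup, hq.1.support_nodup.tail, fun a ha b hb hab => ?_⟩
    have hv : v ∉ q.support.tail := by
      have := hq.1.support_nodup
      rw [← cons_tail_support] at this
      exact (List.nodup_cons.1 this).1
    subst hab
    obtain rfl | rfl := h a ha a (List.mem_of_mem_tail hb) (.inl rfl) <;> exact hv hb
  · rw [mem_support_append_iff] at ha hb
    rw [edges_append, List.mem_append]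
    rcases ha with ha | ha <;> rcases hb with hb | hb
    · exact .inl (hp.2 a b ha hb hab)
    · obtain rfl | rfl := h a ha b hb (.inr hab)
      · exact .inr (hq.2 _ b q.start_mem_support hb hab)
      · exact .inl (hp.2 a _ ha p.end_mem_support hab)
    · obtain rfl | rfl := h b hb a ha (.inr hab.symm)
      · exact .inr (hq.2 a _ ha q.start_mem_support hab)
      · exact .inl (hp.2 _ b p.end_mem_support hb hab)
    · exact .inr (hq.2 a b ha hb hab)

lemma isMonophonic_toWalk_append_toWalk {x : V} (hxu : G.Adj x u) (huv : G.Adj u v)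
    (hxv : x ≠ v) (hnadj : ¬G.Adj x v) : (hxu.toWalk.append huv.toWalk).IsMonophonic := by
  refine (isMonophonic_toWalk hxu).append (isMonophonic_toWalk huv) ?_
  simp only [Adj.toWalk, support_cons, support_nil, List.mem_cons, List.not_mem_nil, or_false]
  rintro a (rfl | rfl) b (rfl | rfl) h <;> simp_all

end Walk

lemma Connected.exists_isMonophonic (hG : G.Connected) (u v : V) :
    ∃ p : G.Walk u v, p.IsMonophonic :=
  let ⟨p, hp⟩ := hG.exists_walk_length_eq_dist u v
  ⟨p, p.isMonophonic_of_length_eq_dist hp⟩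

lemma IsMPSet.comap {S : Set V'} (hS : G'.IsMPSet S) (e : G ≃g G') : G.IsMPSet (e ⁻¹' S) := by
  intro u v p hp
  have himage : e '' {x ∈ e ⁻¹' S | x ∈ p.support} = {y ∈ S | y ∈ (p.map e.toHom).support} := by
    ext y
    simp only [Set.mem_image, Set.mem_ofPred_eq, Set.mem_preimage, Walk.support_map, List.mem_map]
    constructor
    · rintro ⟨x, ⟨hxS, hx⟩, rfl⟩
      exact ⟨hxS, x, hx, rfl⟩
    · rintro ⟨hyS, x, hx, rfl⟩
      exact ⟨x, ⟨hyS, hx⟩, rfl⟩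
  rw [← Set.ncard_image_of_injective _ e.injective, himage]
  exact hS _ (hp.map e.toEmbedding)

lemma IsMPSet.false_of_three_mem_support {S : Set V} (hS : G.IsMPSet S) {u v : V}
    {p : G.Walk u v} (hp : p.IsMonophonic) {a b c : V} (ha : a ∈ S) (hb : b ∈ S) (hc : c ∈ S)
    (hap : a ∈ p.support) (hbp : b ∈ p.support) (hcp : c ∈ p.support)
    (hab : a ≠ b) (hac : a ≠ c) (hbc : b ≠ c) : False := by
  have hsub : {a, b, c} ⊆ {x ∈ S | x ∈ p.support} := by
    rintro x (rfl | rfl | rfl) <;> exact ⟨‹_›, ‹_›⟩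
  have hle := Set.ncard_le_ncard hsub (p.support.finite_toSet.subset fun x hx => hx.2)
  rw [Set.ncard_eq_three.2 ⟨a, b, c, hab, hac, hbc, rfl⟩] at hle
  exact absurd (hle.trans (hS p hp)) (by norm_num)

end

section BoxProd

variable {α β : Type*} {G : SimpleGraph α} {H : SimpleGraph β}

namespace Walk

variable {g₁ g₂ : α} {c a d : β}

lemma support_boxProdLeft (b : β) (W : G.Walk g₁ g₂) :
    (W.boxProdLeft H b).support = W.support.map (·, b) :=
  support_map _ _

lemma support_boxProdRight (g : α) (P : H.Walk c d) :
    (P.boxProdRight G g).support = P.support.map (g, ·) :=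
  support_map _ _

lemma IsMonophonic.boxProdLeft {W : G.Walk g₁ g₂} (hW : W.IsMonophonic) (b : β) :
    (W.boxProdLeft H b).IsMonophonic :=
  hW.map _

lemma IsMonophonic.boxProdRight {P : H.Walk c d} (hP : P.IsMonophonic) (g : α) :
    (P.boxProdRight G g).IsMonophonic :=
  hP.map _

def boxProdStair (P : H.Walk c a) (W : G.Walk g₁ g₂) (Q : H.Walk a d) :
    (G □ H).Walk (g₁, c) (g₂, d) :=
  (P.boxProdRight G g₁).append ((W.boxProdLeft H a).append (Q.boxProdRight G g₂))

lemma mem_support_boxProdStair (P : H.Walk c a) {W : G.Walk g₁ g₂} (Q : H.Walk a d) {w : α}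
    (hw : w ∈ W.support) : (w, a) ∈ (boxProdStair P W Q).support := by
  simp only [boxProdStair, mem_support_append_iff, support_boxProdLeft, List.mem_map]
  exact .inr (.inl ⟨w, hw, rfl⟩)

lemma IsMonophonic.boxProdStair {P : H.Walk c a} {W : G.Walk g₁ g₂} {Q : H.Walk a d}
    (hP : P.IsMonophonic) (hW : W.IsMonophonic) (hQ : Q.IsMonophonic) (hne : g₁ ≠ g₂)
    (hcross : G.Adj g₁ g₂ → ∀ x ∈ P.support, x ∈ Q.support → x = a) :
    (Walk.boxProdStair P W Q).IsMonophonic := by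
  -- Vertices of different pieces that coincide or are adjacent meet at a corner `(gᵢ, a)`,
  -- except for `(g₁, x) ~ (g₂, x)`, which `hcross` rules out.
  refine (hP.boxProdRight g₁).append ((hW.boxProdLeft a).append (hQ.boxProdRight g₂) ?_) ?_ <;>
    simp only [support_boxProdLeft, support_boxProdRight, List.mem_map, mem_support_append_iff]
  · rintro _ ⟨w, hw, rfl⟩ _ ⟨y, hy, rfl⟩ h
    simp only [boxProd_adj, Prod.mk.injEq] at h ⊢
    grind
  · rintro _ ⟨x, hx, rfl⟩ _ (⟨w, hw, rfl⟩ | ⟨y, hy, rfl⟩) h <;>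
      simp only [boxProd_adj, Prod.mk.injEq] at h ⊢ <;> grind

end Walk

open Walk

variable {S : Set (α × β)}

lemma IsMPSet.adj_of_isMonophonic_between (hH : H.Connected) (hS : (G □ H).IsMPSet S)
    {g₁ g₂ w : α} {c a d : β} {W : G.Walk g₁ g₂} (hW : W.IsMonophonic) (hw : w ∈ W.support)
    (hne : g₁ ≠ g₂) (h₁ : (g₁, c) ∈ S) (h : (w, a) ∈ S) (h₂ : (g₂, d) ∈ S)
    (h₁w : (g₁, c) ≠ (w, a)) (hw₂ : (w, a) ≠ (g₂, d)) : G.Adj g₁ g₂ := by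
  by_contra hnadj
  obtain ⟨P, hP⟩ := hH.exists_isMonophonic c a
  obtain ⟨Q, hQ⟩ := hH.exists_isMonophonic a d
  exact hS.false_of_three_mem_support (hP.boxProdStair hW hQ hne (absurd · hnadj)) h₁ h h₂
    (start_mem_support _) (mem_support_boxProdStair P Q hw) (end_mem_support _)
    h₁w (fun h => hne congr($h.1)) hw₂

lemma IsMPSet.snd_eq_of_adj_of_isMonophonic (hH : H.Connected) (hS : (G □ H).IsMPSet S)
    {x y z : α} {c d : β} (hxy : G.Adj x y) {Q : G.Walk y z} (hQ : Q.IsMonophonic)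
    (hxQ : x ∉ Q.support) (hx : (x, c) ∈ S) (hy : (y, c) ∈ S) (hz : (z, d) ∈ S) : c = d := by
  by_contra hcd
  obtain ⟨W, hW⟩ := hH.exists_isMonophonic c d
  have hcross (_ : H.Adj c d) (t : α) (ht : t ∈ hxy.toWalk.support) (htQ : t ∈ Q.support) :
      t = y := by
    simp only [Adj.toWalk, support_cons, support_nil, List.mem_cons, List.not_mem_nil,
      or_false] at ht
    exact ht.resolve_left fun h => hxQ (h ▸ htQ)
  -- the staircase `(x, c) - (y, c) ⇝ (y, d) ⇝ (z, d)`, built in `H □ G`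
  exact (hS.comap (boxProdComm H G)).false_of_three_mem_support
    ((isMonophonic_toWalk hxy).boxProdStair hW hQ hcd hcross) (a := (c, x)) (b := (c, y))
    (c := (d, z)) hx hy hz (start_mem_support _)
    (mem_support_boxProdStair _ _ W.start_mem_support) (end_mem_support _)
    (fun h => hxy.ne congr($h.2)) (fun h => hcd congr($h.1)) (fun h => hcd congr($h.1))

lemma IsMPSet.isClique_image_fst_and_injOn_snd (hG : G.Connected) (hH : H.Connected)
    (hS : (G □ H).IsMPSet S) {g : α} {a b : β} (ha : (g, a) ∈ S) (hb : (g, b) ∈ S)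
    (hab : a ≠ b) : G.IsClique (Prod.fst '' S) ∧ S.InjOn Prod.snd := by
  have adj_g {x : α} {c : β} (hx : (x, c) ∈ S) (hxg : x ≠ g) : G.Adj x g := by
    obtain ⟨W, hW⟩ := hG.exists_isMonophonic x g
    exact hS.adj_of_isMonophonic_between hH hW W.end_mem_support hxg hx ha hb
      (fun h => hxg congr($h.1)) (fun h => hab congr($h.2))
  have hclique : G.IsClique (Prod.fst '' S) := by
    rintro _ ⟨⟨x, c⟩, hx, rfl⟩ _ ⟨⟨y, d⟩, hy, rfl⟩ (hxy : x ≠ y)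
    rcases eq_or_ne x g with rfl | hxg
    · exact (adj_g hy hxy.symm).symm
    rcases eq_or_ne y g with rfl | hyg
    · exact adj_g hx hxy
    by_contra hnadj
    exact hnadj <| hS.adj_of_isMonophonic_between hH
      (isMonophonic_toWalk_append_toWalk (adj_g hx hxg) (adj_g hy hyg).symm hxy hnadj)
      (by simp) hxy hx ha hy (fun h => hxg congr($h.1)) (fun h => hyg congr($h.1).symm)
  refine ⟨hclique, ?_⟩
  rintro ⟨x, c⟩ hx ⟨y, c'⟩ hy (rfl : c = c')
  obtain ⟨e, he, hec⟩ : ∃ e, (g, e) ∈ S ∧ c ≠ e := by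
    rcases eq_or_ne c a with rfl | hca
    exacts [⟨b, hb, hab⟩, ⟨a, ha, hca⟩]
  have no_adj_pair {x y : α} (hx : (x, c) ∈ S) (hy : (y, c) ∈ S) (hxy : G.Adj x y) (hxg : x ≠ g) :
      False := by
    rcases eq_or_ne y g with rfl | hyg
    · exact hec <| hS.snd_eq_of_adj_of_isMonophonic hH hxy isMonophonic_nil
        (by simpa using hxy.ne) hx hy he
    · exact hec <| hS.snd_eq_of_adj_of_isMonophonic hH hxy (isMonophonic_toWalk (adj_g hy hyg))
        (by simp [hxy.ne, hxg]) hx hy he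
  by_contra hne
  have hxy : x ≠ y := fun h => hne (h ▸ rfl)
  have hadj : G.Adj x y := hclique ⟨_, hx, rfl⟩ ⟨_, hy, rfl⟩ hxy
  rcases eq_or_ne x g with rfl | hxg
  · exact no_adj_pair hy hx hadj.symm hxy.symm
  · exact no_adj_pair hx hy hadj hxg

variable {r : ℕ} {u : Fin r → α} {v : Fin r → β}

lemma IsMPSet.range_swap (hS : (G □ H).IsMPSet (Set.range fun i => (u i, v i))) :
    (H □ G).IsMPSet (Set.range fun i => (v i, u i)) := by
  convert hS.comap (boxProdComm H G) using 1
  ext ⟨b, a⟩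
  simp [and_comm]

lemma IsMPSet.layer_or_cliquey_of_not_injective (hG : G.Connected) (hH : H.Connected)
    (hinj : Function.Injective fun i => (u i, v i))
    (hS : (G □ H).IsMPSet (Set.range fun i => (u i, v i))) (hu : ¬Function.Injective u) :
    (∀ i j, u i = u j) ∨
      (G.IsClique (Set.range u) ∧ 2 ≤ (Set.range u).ncard ∧ Function.Injective v) := by
  obtain ⟨i, j, huij, hij⟩ := Function.not_injective_iff.1 hu
  have hj : (u i, v j) ∈ Set.range fun i => (u i, v i) := huij ▸ ⟨j, rfl⟩
  obtain ⟨hclique, hinjOn⟩ := hS.isClique_image_fst_and_injOn_snd hG hH ⟨i, rfl⟩ hj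
    fun h => hij (hinj (Prod.ext huij h))
  rw [← Set.range_comp] at hclique
  by_cases hconst : ∀ i j, u i = u j
  · exact .inl hconst
  simp only [not_forall] at hconst
  obtain ⟨k, l, hkl⟩ := hconst
  exact .inr ⟨hclique, (Set.one_lt_ncard (Set.toFinite _)).2 ⟨u k, ⟨k, rfl⟩, u l, ⟨l, rfl⟩, hkl⟩,
    fun k l hkl => hinj (hinjOn ⟨k, rfl⟩ ⟨l, rfl⟩ hkl)⟩

end BoxProd

end SimpleGraph

theorem isMPSet_boxProd_trichotomy_general {α β : Type*}
    (G : SimpleGraph α) (H : SimpleGraph β) (hG : G.Connected) (hH : H.Connected)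
    (r : ℕ) (hr : 2 ≤ r) (u : Fin r → α) (v : Fin r → β)
    (hinj : Function.Injective fun i => (u i, v i))
    (hS : (G □ H).IsMPSet (Set.range fun i => (u i, v i))) :
    -- (a) S lies in a single H-layer or in a single G-layer
    ((∀ i j, u i = u j) ∨ (∀ i j, v i = v j)) ∨
    -- (b) varied: all uᵢ distinct, all vᵢ distinct, neither projection induces a clique
    (Function.Injective u ∧ Function.Injective v ∧
      ¬ G.IsClique (Set.range u) ∧ ¬ H.IsClique (Set.range v)) ∨
    -- (c) cliquey
    ((G.IsClique (Set.range u) ∧ 2 ≤ (Set.range u).ncard ∧ Function.Injective v) ∨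
     (H.IsClique (Set.range v) ∧ 2 ≤ (Set.range v).ncard ∧ Function.Injective u)) := by
  by_cases hu : Function.Injective u
  · by_cases hv : Function.Injective v
    · have hu2 : 2 ≤ (Set.range u).ncard := by rwa [Set.ncard_range_of_injective hu, Nat.card_fin]
      have hv2 : 2 ≤ (Set.range v).ncard := by rwa [Set.ncard_range_of_injective hv, Nat.card_fin]
      by_cases hcu : G.IsClique (Set.range u)
      · exact .inr (.inr (.inl ⟨hcu, hu2, hv⟩))
      by_cases hcv : H.IsClique (Set.range v)
      · exact .inr (.inr (.inr ⟨hcv, hv2, hu⟩))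
      exact .inr (.inl ⟨hu, hv, hcu, hcv⟩)
    · rcases hS.range_swap.layer_or_cliquey_of_not_injective hH hG
        (Prod.swap_injective.comp hinj) hv with h | h
      exacts [.inl (.inr h), .inr (.inr (.inr h))]
  · rcases hS.layer_or_cliquey_of_not_injective hG hH hinj hu with h | h
    exacts [.inl (.inl h), .inr (.inr (.inl h))]

/-- a monophonic position set `S = {(uᵢ,vᵢ) : i ∈ [r]}` of `G □ H` with
`r ≥ 2` is layered, varied, or cliquey. -/
theorem isMPSet_boxProd_trichotomy {α β : Type*} [Fintype α] [Fintype β]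
    (G : SimpleGraph α) (H : SimpleGraph β) (hG : G.Connected) (hH : H.Connected)
    (r : ℕ) (hr : 2 ≤ r) (u : Fin r → α) (v : Fin r → β)
    (hinj : Function.Injective fun i => (u i, v i))
    (hS : (G □ H).IsMPSet (Set.range fun i => (u i, v i))) :
    -- (a) S lies in a single H-layer or in a single G-layer
    ((∀ i j, u i = u j) ∨ (∀ i j, v i = v j)) ∨
    -- (b) varied: all uᵢ distinct, all vᵢ distinct, neither projection induces a clique
    (Function.Injective u ∧ Function.Injective v ∧
      ¬ G.IsClique (Set.range u) ∧ ¬ H.IsClique (Set.range v)) ∨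
    -- (c) cliquey
    ((G.IsClique (Set.range u) ∧ 2 ≤ (Set.range u).ncard ∧ Function.Injective v) ∨
     (H.IsClique (Set.range v) ∧ 2 ≤ (Set.range v).ncard ∧ Function.Injective u)) :=
  isMPSet_boxProd_trichotomy_general G H hG hH r hr u v hinj hS
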